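/- arXiv:2309.10196 — 5 statements merged into one kernel-verified Lean document; each statement's English description precedes it below -/
import Mathlib

section
/- For integers a, b, the identity C(a,b) = C(a, a-b) holds if and only if either a ≥ 0, or a < b < 0. -/
/-- Generalized binomial coefficient `C(a,b)` for integers `a, b`:
`a(a-1)⋯(a-b+1)/b!` when `b ≥ 0`, and `0` when `b < 0`. -/
def intBinom (a b : ℤ) : ℤ :=
  if b < 0 then 0
  else if 0 ≤ a then (a.toNat.choose b.toNat : ℤ)
  else (-1) ^ b.toNat * ((b - a - 1).toNat.choose b.toNat : ℤ)

theorem intBinom_symm_iff (a b : ℤ) :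
    intBinom a b = intBinom a (a - b) ↔ 0 ≤ a ∨ (a < b ∧ b < 0) := by
  unfold intBinom
  rcases le_or_gt 0 a with ha | ha
  · constructor
    · intro _; exact Or.inl ha
    · intro _
      rcases lt_or_ge b 0 with hb | hb
      · rw [if_pos hb, if_neg (by omega : ¬ a - b < 0), if_pos ha]
        symm; norm_cast
        exact Nat.choose_eq_zero_of_lt (by omega)
      · rw [if_neg (by omega : ¬ b < 0), if_pos ha]
        rcases lt_or_ge (a - b) 0 with hab | hab
        · rw [if_pos hab]
          norm_cast
          exact Nat.choose_eq_zero_of_lt (by omega)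
        · rw [if_neg (by omega : ¬ a - b < 0), if_pos ha]
          norm_cast
          have h1 : (a - b).toNat = a.toNat - b.toNat := by omega
          rw [h1, Nat.choose_symm (by omega)]
  · constructor
    · intro h
      rcases lt_or_ge b 0 with hb | hb
      · rcases lt_or_ge a b with hab | hab
        · exact Or.inr ⟨hab, hb⟩
        · exfalso
          rw [if_pos hb, if_neg (by omega : ¬ a - b < 0), if_neg (by omega : ¬ 0 ≤ a)] at h
          have hpos : 0 < ((a - b - a - 1).toNat.choose (a - b).toNat : ℤ) := by
            exact_mod_cast Nat.choose_pos (by omega)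
          have hne : ((-1 : ℤ)) ^ (a - b).toNat ≠ 0 := by
            apply pow_ne_zero; norm_num
          exact (mul_ne_zero hne hpos.ne') h.symm
      · exfalso
        rw [if_neg (by omega : ¬ b < 0), if_neg (by omega : ¬ 0 ≤ a),
          if_pos (by omega : a - b < 0)] at h
        have hpos : 0 < ((b - a - 1).toNat.choose b.toNat : ℤ) := by
          exact_mod_cast Nat.choose_pos (by omega)
        have hne : ((-1 : ℤ)) ^ b.toNat ≠ 0 := by
          apply pow_ne_zero; norm_num
        exact (mul_ne_zero hne hpos.ne') h
    · rintro (h | ⟨hab, hb⟩)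
      · omega
      · rw [if_pos hb, if_pos (by omega : a - b < 0)]
end

section
/- Let F_q be a finite field, m ≥ 1, and d ≥ m(q-1)+1. Then the evaluation map Ev from the space of homogeneous polynomials of degree d in F_q[X_0,…,X_m] (together with 0) to F_q^{p_m}, evaluating at fixed representatives of all p_m = (q^{m+1}-1)/(q-1) points of P^m(F_q), is surjective; i.e., the projective Reed-Muller code PRM_q(d,m) is all of F_q^{p_m}. -/
/-- `v` is the standard representative of a point of projective space:
its last nonzero coordinate equals `1`. -/
def IsRep {K : Type} [Field K] {n : ℕ} (v : Fin n → K) : Prop :=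
  ∃ i, v i = 1 ∧ ∀ j, i < j → v j = 0

instance {K : Type} [Field K] [DecidableEq K] {n : ℕ} (v : Fin n → K) :
    Decidable (IsRep v) := by unfold IsRep; infer_instance

open MvPolynomial Finset

/-- Homogeneous indicator polynomial for the representative `v` with pivot `i`. -/
noncomputable def indic {K : Type} [Field K] [Fintype K] {m : ℕ} (d : ℕ)
    (i : Fin (m+1)) (v : Fin (m+1) → K) : MvPolynomial (Fin (m+1)) K :=
  (X i)^(d - m*(Fintype.card K - 1)) *
    ∏ j ∈ univ.erase i,
      ((X i)^(Fintype.card K - 1) - (X j - C (v j) * X i)^(Fintype.card K - 1))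

lemma eval_indic {K : Type} [Field K] [Fintype K] [DecidableEq K] {m d : ℕ}
    (hd : m * (Fintype.card K - 1) + 1 ≤ d)
    (v w : Fin (m+1) → K) (hw : IsRep w)
    (i : Fin (m+1)) (hi1 : v i = 1) (hi2 : ∀ j, i < j → v j = 0) :
    eval w (indic d i v) = if w = v then 1 else 0 := by
  have hq : 1 ≤ Fintype.card K - 1 := by
    have := Fintype.one_lt_card (α := K); omega
  have he : 1 ≤ d - m * (Fintype.card K - 1) := by omega
  have hev : eval w (indic d i v) =
      (w i)^(d - m*(Fintype.card K - 1)) *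
      ∏ j ∈ univ.erase i,
        ((w i)^(Fintype.card K - 1) - (w j - v j * w i)^(Fintype.card K - 1)) := by
    simp [indic, eval_prod]
  by_cases hwv : w = v
  · subst hwv
    rw [hev, hi1]
    rw [Finset.prod_congr rfl (fun j hj => by
      rw [one_pow, mul_one, sub_self, zero_pow (by omega), sub_zero])]
    simp
  · rw [if_neg hwv, hev]
    by_cases hwi : w i = 0
    · rw [hwi, zero_pow (by omega), zero_mul]
    · have hpow : (w i)^(Fintype.card K - 1) = 1 := FiniteField.pow_card_sub_one_eq_one _ hwi
      have hex : ∃ j, j ≠ i ∧ w j ≠ v j * w i := by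
        by_contra hno
        push_neg at hno
        apply hwv
        have hz : ∀ j, i < j → w j = 0 := fun j hj => by
          rw [hno j (Fin.ne_of_gt hj), hi2 j hj, zero_mul]
        have hwi1 : w i = 1 := by
          obtain ⟨k, hk1, hk2⟩ := hw
          rcases lt_trichotomy i k with h | h | h
          · exact absurd (hz k h) (by rw [hk1]; exact one_ne_zero)
          · rw [← h] at hk1; exact hk1
          · exact absurd (hk2 i h) hwi
        funext j
        by_cases hji : j = i
        · rw [hji, hwi1, hi1]
        · rw [hno j hji, hwi1, mul_one]
      obtain ⟨j, hji, hjw⟩ := hex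
      rw [Finset.prod_eq_zero (Finset.mem_erase.mpr ⟨hji, mem_univ j⟩), mul_zero]
      rw [hpow, FiniteField.pow_card_sub_one_eq_one _ (sub_ne_zero.mpr hjw), sub_self]

/-- If `d ≥ m(q-1)+1` then the evaluation map from homogeneous polynomials of degree `d`
to functions on the standard representatives of points of `P^m(F_q)` is surjective:
`PRM_q(d,m)` is the full space. -/
theorem PRM_surjective (K : Type) [Field K] [Fintype K] [DecidableEq K]
    (m d : ℕ) (hm : 1 ≤ m) (hd : m * (Fintype.card K - 1) + 1 ≤ d)
    (c : {v : Fin (m + 1) → K // IsRep v} → K) :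
    ∃ F : MvPolynomial (Fin (m + 1)) K, F.IsHomogeneous d ∧
      ∀ p : {v : Fin (m + 1) → K // IsRep v}, MvPolynomial.eval p.1 F = c p := by
  classical
  have hind : ∀ (i : Fin (m+1)) (v : Fin (m+1) → K), (indic d i v).IsHomogeneous d := by
    intro i v
    have this1 := ((isHomogeneous_X K i).pow (d - m*(Fintype.card K - 1))).mul
      (IsHomogeneous.prod (univ.erase i)
        (fun j => (X i)^(Fintype.card K - 1) - (X j - C (v j) * X i)^(Fintype.card K - 1))
        (fun _ => Fintype.card K - 1)
        (fun j _ => by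
          have hx : ((X i : MvPolynomial (Fin (m+1)) K)^(Fintype.card K - 1)).IsHomogeneous
              (1 * (Fintype.card K - 1)) := (isHomogeneous_X K i).pow _
          have h2 : ((C (v j) * X i : MvPolynomial (Fin (m+1)) K)).IsHomogeneous 1 := by
            simpa using (isHomogeneous_C (Fin (m+1)) (v j)).mul (isHomogeneous_X K i)
          have hl := (isHomogeneous_X K j).sub h2
          have hy := hl.pow (Fintype.card K - 1)
          simpa using hx.sub hy))
    simp only [Finset.sum_const, card_erase_of_mem (mem_univ i), card_univ, Fintype.card_fin,
      smul_eq_mul, one_mul, Nat.add_sub_cancel] at this1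
    rw [indic]
    convert this1 using 2
    omega
  refine ⟨∑ p : {v : Fin (m + 1) → K // IsRep v},
      C (c p) * indic d p.2.choose p.1, ?_, ?_⟩
  · exact IsHomogeneous.sum _ _ _ (fun p _ => by
      simpa using (isHomogeneous_C (Fin (m+1)) (c p)).mul (hind p.2.choose p.1))
  · intro p
    rw [map_sum]
    rw [Finset.sum_eq_single p]
    · obtain ⟨h1, h2⟩ := p.2.choose_spec
      rw [map_mul, eval_C, eval_indic hd p.1 p.1 p.2 _ h1 h2, if_pos rfl, mul_one]
    · intro q _ hq
      obtain ⟨h1, h2⟩ := q.2.choose_spec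
      rw [map_mul, eval_C, eval_indic hd q.1 p.1 p.2 _ h1 h2,
        if_neg (fun h => hq (Subtype.ext h).symm), mul_zero]
    · intro h; exact absurd (mem_univ p) h
end

section
/- Let F_q be a finite field, m ≥ 1, 1 ≤ d ≤ m(q-1)+1, write d-1 = t(q-1)+s with t ≥ 0, 0 ≤ s < q-1, and let ω_1,…,ω_s be distinct elements of F_q. Then the polynomial G := X_t · ∏_{i=0}^{t-1}(X_i^{q-1} − X_t^{q-1}) · ∏_{j=1}^{s}(X_{t+1} − ω_j X_t) is homogeneous of degree d and its number of non-zeros in P^m(F_q) is exactly (q−s)q^{m−t−1}. -/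
/-!
At a vector with `v_t ≠ 0` the factor `X_i^{q-1} - X_t^{q-1}` is non-zero exactly when
`v_i = 0`, so `G` is non-zero exactly on the vectors with `v_0 = ⋯ = v_{t-1} = 0`, `v_t ≠ 0`
and `v_{t+1} / v_t ∉ {ω_j}`. This set is stable under scaling, and every line in it contains
exactly one standard representative and exactly one vector with `v_t = 1`; so we may count the
latter instead. They form a box: `q - s` choices for `v_{t+1}` and `q` for each of the
`m - t - 1` remaining coordinates (when `t = m` the box is a single point, and `q · q⁻¹ = 1`).
-/

open Finset MvPolynomial

theorem MulAction.card_eq_card_mul_card_of_existsUnique {G α : Type*} [Group G] [MulAction G α]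
    {Q N : α → Prop} (hQ : ∀ (g : G) a, Q a → Q (g • a))
    (hN : ∀ a, Q a → ∃! g : G, N (g • a)) :
    Nat.card {a // Q a} = Nat.card G * Nat.card {a // N a ∧ Q a} := by
  let f : G × {a // N a ∧ Q a} → {a // Q a} := fun p => ⟨p.1 • p.2.1, hQ _ _ p.2.2.2⟩
  have hinj : Function.Injective f := by
    rintro ⟨g, b, hNb, hQb⟩ ⟨g', b', hNb', _⟩ h
    replace h : g • b = g' • b' := congrArg Subtype.val h
    have hb' : b' = (g'⁻¹ * g) • b := by rw [mul_smul, h, inv_smul_smul]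
    obtain rfl : g' = g := inv_mul_eq_one.mp <|
      (hN b hQb).unique (hb' ▸ hNb') (by rwa [one_smul])
    obtain rfl : b' = b := by rwa [inv_mul_cancel, one_smul] at hb'
    rfl
  have hsurj : Function.Surjective f := by
    rintro ⟨a, hQa⟩
    obtain ⟨g, hg, -⟩ := hN a hQa
    exact ⟨(g⁻¹, ⟨g • a, hg, hQ g a hQa⟩), Subtype.ext (inv_smul_smul g a)⟩
  rw [← Nat.card_prod, Nat.card_congr (Equiv.ofBijective f ⟨hinj, hsurj⟩)]

section Projective

variable {K : Type} [Field K] {n : ℕ}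

theorem exists_last_ne_zero {v : Fin n → K} (hv : v ≠ 0) :
    ∃ k, v k ≠ 0 ∧ ∀ j, k < j → v j = 0 := by
  classical
  have hne : (univ.filter fun i => v i ≠ 0).Nonempty := by
    obtain ⟨i, hi⟩ := Function.ne_iff.mp hv
    exact ⟨i, by simpa using hi⟩
  refine ⟨_, (mem_filter.mp (max'_mem _ hne)).2, fun j hj => ?_⟩
  by_contra h
  exact (le_max' _ j (by simpa using h)).not_gt hj

theorem eq_of_last_ne_zero {v : Fin n → K} {k k' : Fin n}
    (hk : v k ≠ 0) (hk0 : ∀ j, k < j → v j = 0)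
    (hk' : v k' ≠ 0) (hk'0 : ∀ j, k' < j → v j = 0) : k = k' :=
  le_antisymm (not_lt.mp fun h => hk (hk'0 k h)) (not_lt.mp fun h => hk' (hk0 k' h))

theorem existsUnique_isRep_smul {v : Fin n → K} (hv : v ≠ 0) :
    ∃! c : Kˣ, IsRep (c • v) := by
  obtain ⟨k, hk, hk0⟩ := exists_last_ne_zero hv
  refine ⟨(Units.mk0 _ hk)⁻¹,
    ⟨k, by simp [Units.smul_def, hk], fun j hj => by simp [hk0 j hj]⟩, ?_⟩
  rintro c ⟨i, hi, hi0⟩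
  simp only [Units.smul_def, Pi.smul_apply, smul_eq_mul] at hi hi0
  have hvi : v i ≠ 0 := right_ne_zero_of_mul_eq_one hi
  obtain rfl := eq_of_last_ne_zero hvi (fun j hj => (mul_eq_zero.mp (hi0 j hj)).resolve_left
    c.ne_zero) hk hk0
  exact Units.ext (eq_inv_of_mul_eq_one_left hi)

theorem existsUnique_smul_apply_eq_one {v : Fin n → K} {i : Fin n} (hv : v i ≠ 0) :
    ∃! c : Kˣ, (c • v) i = 1 := by
  refine ⟨(Units.mk0 _ hv)⁻¹, by simp [Units.smul_def, hv], fun c hc => ?_⟩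
  simp only [Units.smul_def, Pi.smul_apply, smul_eq_mul] at hc
  exact Units.ext (eq_inv_of_mul_eq_one_left hc)

theorem card_isRep_and_eq_card_apply_eq_one_and [Finite K] {Q : (Fin n → K) → Prop} (i : Fin n)
    (hQ : ∀ (c : Kˣ) v, Q v → Q (c • v)) (hQi : ∀ v, Q v → v i ≠ 0) :
    Nat.card {v // IsRep v ∧ Q v} = Nat.card {v // v i = 1 ∧ Q v} := by
  have hrep := MulAction.card_eq_card_mul_card_of_existsUnique hQ fun v hv =>
    existsUnique_isRep_smul fun h => hQi v hv (by simp [h])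
  have hone := MulAction.card_eq_card_mul_card_of_existsUnique (N := fun v => v i = 1) hQ
    fun v hv => existsUnique_smul_apply_eq_one (hQi v hv)
  exact Nat.eq_of_mul_eq_mul_left Nat.card_pos (hrep.symm.trans hone)

end Projective

theorem FiniteField.pow_card_sub_one_sub_ne_zero_iff {K : Type*} [Field K] [Fintype K]
    {x y : K} (hy : y ≠ 0) :
    x ^ (Fintype.card K - 1) - y ^ (Fintype.card K - 1) ≠ 0 ↔ x = 0 := by
  rw [pow_card_sub_one_eq_one y hy, sub_ne_zero]
  by_cases hx : x = 0
  · have : Fintype.card K - 1 ≠ 0 := by have := Fintype.one_lt_card (α := K); omega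
    simp [hx, this]
  · simp [hx, pow_card_sub_one_eq_one x hx]

theorem prod_range_succ_ite_le {R : Type*} [Field R] {a b : R} (hb : b ≠ 0) {t m : ℕ}
    (ht : t ≤ m) (hab : t = m → a = b) :
    ∏ n ∈ range (m + 1), (if n ≤ t then 1 else if n = t + 1 then a else b) =
      a * b ^ ((m : ℤ) - t - 1) := by
  obtain ⟨r, rfl⟩ := Nat.exists_eq_add_of_le ht
  rw [show t + r + 1 = (t + 1) + r by omega, prod_range_add,
    prod_eq_one fun n hn => if_pos (Nat.lt_succ_iff.mp (mem_range.mp hn)), one_mul]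
  cases r with
  | zero => simp [hab rfl, hb]
  | succ r =>
    have htail : ∀ k ∈ range r,
        (if t + 1 + (k + 1) ≤ t then 1 else if t + 1 + (k + 1) = t + 1 then a else b) = b :=
      fun k _ => by rw [if_neg (by omega), if_neg (by omega)]
    rw [prod_range_succ', prod_congr rfl htail, prod_const, card_range, add_zero,
      if_neg (by omega), if_pos rfl, mul_comm,
      show ((t + (r + 1) : ℕ) : ℤ) - t - 1 = r by push_cast; ring, zpow_natCast]

section MinWeight

open Fin.NatCast

variable {K : Type} [Field K] {m s : ℕ}

noncomputable def minWeightPoly (q t : ℕ) (ω : Fin s → K) : MvPolynomial (Fin (m + 1)) K :=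
  X (t : Fin (m + 1)) *
    (∏ i ∈ range t, (X (i : Fin (m + 1)) ^ (q - 1) - X (t : Fin (m + 1)) ^ (q - 1))) *
    ∏ j : Fin s, (X ((t + 1 : ℕ) : Fin (m + 1)) - C (ω j) * X (t : Fin (m + 1)))

theorem isHomogeneous_minWeightPoly (q t : ℕ) (ω : Fin s → K) :
    (minWeightPoly (m := m) q t ω).IsHomogeneous (1 + t * (q - 1) + s) := by
  have hA := IsHomogeneous.prod (range t) _ (fun _ => q - 1) fun i _ =>
    (isHomogeneous_X_pow (R := K) (i : Fin (m + 1)) (q - 1)).sub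
      (isHomogeneous_X_pow (t : Fin (m + 1)) (q - 1))
  have hB := IsHomogeneous.prod (univ : Finset (Fin s)) _ (fun _ => 1) fun j _ =>
    (isHomogeneous_X K ((t + 1 : ℕ) : Fin (m + 1))).sub
      (isHomogeneous_C_mul_X (ω j) (t : Fin (m + 1)))
  simp only [sum_const, card_range, smul_eq_mul, Finset.card_univ, Fintype.card_fin,
    mul_one] at hA hB
  exact ((isHomogeneous_X K _).mul (mul_comm t _ ▸ hA)).mul hB

def MinWeightLocus (t : ℕ) (ω : Fin s → K) (v : Fin (m + 1) → K) : Prop :=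
  (∀ i ∈ range t, v i = 0) ∧ v t ≠ 0 ∧
    ∀ j, v ((t + 1 : ℕ) : Fin (m + 1)) ≠ ω j * v t

theorem MinWeightLocus.units_smul {t : ℕ} {ω : Fin s → K} {v : Fin (m + 1) → K}
    (hv : MinWeightLocus t ω v) (c : Kˣ) : MinWeightLocus t ω (c • v) := by
  obtain ⟨hvi, hvt, hω⟩ := hv
  simp only [MinWeightLocus, Units.smul_def, Pi.smul_apply, smul_eq_mul]
  refine ⟨fun i hi => by rw [hvi i hi, mul_zero], mul_ne_zero c.ne_zero hvt,
    fun j h => hω j (mul_left_cancel₀ c.ne_zero (h.trans (mul_left_comm _ _ _)))⟩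

variable [Fintype K]

theorem eval_minWeightPoly_ne_zero_iff (t : ℕ) (ω : Fin s → K)
    (v : Fin (m + 1) → K) :
    eval v (minWeightPoly (Fintype.card K) t ω) ≠ 0 ↔ MinWeightLocus t ω v := by
  simp only [minWeightPoly, map_mul, map_prod, map_sub, map_pow, eval_X, eval_C,
    mul_ne_zero_iff, prod_ne_zero_iff, sub_ne_zero, MinWeightLocus]
  constructor
  · rintro ⟨⟨hvt, hvi⟩, hω⟩
    exact ⟨fun i hi => (FiniteField.pow_card_sub_one_sub_ne_zero_iff hvt).mp
      (sub_ne_zero.mpr (hvi i hi)), hvt, fun j => hω j (mem_univ j)⟩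
  · rintro ⟨hvi, hvt, hω⟩
    exact ⟨⟨hvt, fun i hi => sub_ne_zero.mp
      ((FiniteField.pow_card_sub_one_sub_ne_zero_iff hvt).mpr (hvi i hi))⟩, fun j _ => hω j⟩

section Box

variable [DecidableEq K]

def minWeightBox (t : ℕ) (ω : Fin s → K) (i : Fin (m + 1)) : Finset K :=
  if (i : ℕ) < t then {0} else if (i : ℕ) = t then {1}
  else if (i : ℕ) = t + 1 then (univ.image ω)ᶜ else univ

theorem apply_eq_one_and_minWeightLocus_iff {t : ℕ} (ht : t ≤ m) (hs : t = m → s = 0)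
    (ω : Fin s → K) (v : Fin (m + 1) → K) :
    v t = 1 ∧ MinWeightLocus t ω v ↔ v ∈ Fintype.piFinset (minWeightBox t ω) := by
  have hval {n : ℕ} (hn : n ≤ m) : ((n : Fin (m + 1)) : ℕ) = n :=
    Fin.val_cast_of_lt (by omega)
  simp only [MinWeightLocus, Fintype.mem_piFinset, minWeightBox]
  constructor
  · rintro ⟨hv1, hvi, -, hω⟩ i
    split_ifs with h1 h2 h3
    · simpa using hvi i (mem_range.mpr h1)
    · simpa [← Fin.ext ((hval ht).trans h2.symm)] using hv1
    · obtain rfl : ((t + 1 : ℕ) : Fin (m + 1)) = i := Fin.ext (hval (by omega) |>.trans h3.symm)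
      simpa [hv1, eq_comm] using hω
    · exact mem_univ _
  · intro hv
    have hv1 : v t = 1 := by simpa [hval ht] using hv t
    refine ⟨hv1, fun i hi => ?_, by simp [hv1], fun j => ?_⟩
    · have hi : i < t := mem_range.mp hi
      simpa [hval (n := i) (by omega), hi] using hv i
    · rcases ht.lt_or_eq with ht | rfl
      · have hmem := hv ((t + 1 : ℕ) : Fin (m + 1))
        rw [hval ht, if_neg (by omega), if_neg (by omega), if_pos rfl, mem_compl] at hmem
        rw [hv1, mul_one]
        exact fun h => hmem (h ▸ mem_image_of_mem ω (mem_univ j))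
      · -- for `t = m` the index `t + 1` wraps around to `0`, but then there are no `ω j`
        exact (Fin.cast (hs rfl) j).elim0

theorem card_minWeightBox {t : ℕ} (ω : Fin s → K) (hω : Function.Injective ω)
    (i : Fin (m + 1)) :
    ((minWeightBox t ω i).card : ℚ) =
      if (i : ℕ) ≤ t then 1 else if (i : ℕ) = t + 1 then (Fintype.card K - s : ℚ)
      else Fintype.card K := by
  unfold minWeightBox
  have hs : s ≤ Fintype.card K := by simpa using Fintype.card_le_of_injective ω hω
  split_ifs <;> first | omega | simp [card_compl, card_image_of_injective _ hω, hs]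

end Box

theorem card_apply_eq_one_and_minWeightLocus {t : ℕ} (ht : t ≤ m) (hs : t = m → s = 0)
    {ω : Fin s → K} (hω : Function.Injective ω) :
    (Nat.card {v : Fin (m + 1) → K // v t = 1 ∧ MinWeightLocus t ω v} : ℚ) =
      (Fintype.card K - s) * (Fintype.card K : ℚ) ^ ((m : ℤ) - t - 1) := by
  classical
  have hq : (Fintype.card K : ℚ) ≠ 0 := by simp
  rw [Nat.card_congr (Equiv.subtypeEquivRight (apply_eq_one_and_minWeightLocus_iff ht hs ω)),
    Nat.card_eq_fintype_card, Fintype.card_coe, Fintype.card_piFinset, Nat.cast_prod]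
  simp_rw [card_minWeightBox ω hω]
  rw [Fin.prod_univ_eq_prod_range (fun n => if n ≤ t then (1 : ℚ)
    else if n = t + 1 then (Fintype.card K - s : ℚ) else Fintype.card K)]
  exact prod_range_succ_ite_le hq ht fun h => by simp [hs h]

theorem card_isRep_and_minWeightLocus {t : ℕ} (ht : t ≤ m) (hs : t = m → s = 0)
    {ω : Fin s → K} (hω : Function.Injective ω) :
    (Nat.card {v : Fin (m + 1) → K // IsRep v ∧ MinWeightLocus t ω v} : ℚ) =
      (Fintype.card K - s) * (Fintype.card K : ℚ) ^ ((m : ℤ) - t - 1) := by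
  rw [card_isRep_and_eq_card_apply_eq_one_and (t : Fin (m + 1)) (fun c _ hv => hv.units_smul c)
    fun _ hv => hv.2.1]
  exact card_apply_eq_one_and_minWeightLocus ht hs hω

end MinWeight

open MvPolynomial in
open Fin.NatCast in
theorem PRM_min_weight_example_general (K : Type) [Field K] [Fintype K] [DecidableEq K]
    (q : ℕ) (hq : Fintype.card K = q) (m d t s : ℕ)
    (hd1 : 1 ≤ d) (hd2 : d ≤ m * (q - 1) + 1)
    (hts : d - 1 = t * (q - 1) + s)
    (ω : Fin s → K) (hω : Function.Injective ω) :
    (X ((t : ℕ) : Fin (m + 1)) *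
        (∏ i ∈ Finset.range t,
          (X ((i : ℕ) : Fin (m + 1)) ^ (q - 1) - X ((t : ℕ) : Fin (m + 1)) ^ (q - 1))) *
        ∏ j : Fin s,
          (X ((t + 1 : ℕ) : Fin (m + 1)) - C (ω j) * X ((t : ℕ) : Fin (m + 1)))
        : MvPolynomial (Fin (m + 1)) K).IsHomogeneous d ∧
    (((Finset.univ.filter
        (fun p : {v : Fin (m + 1) → K // IsRep v} =>
          MvPolynomial.eval p.1
            (X ((t : ℕ) : Fin (m + 1)) *
              (∏ i ∈ Finset.range t,
                (X ((i : ℕ) : Fin (m + 1)) ^ (q - 1) -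
                  X ((t : ℕ) : Fin (m + 1)) ^ (q - 1))) *
              ∏ j : Fin s,
                (X ((t + 1 : ℕ) : Fin (m + 1)) -
                  C (ω j) * X ((t : ℕ) : Fin (m + 1)))) ≠ 0)).card : ℚ))
      = ((q : ℚ) - s) * (q : ℚ) ^ ((m : ℤ) - t - 1) := by
  subst hq
  have hq : 1 < Fintype.card K := Fintype.one_lt_card
  have htm : t ≤ m :=
    Nat.le_of_mul_le_mul_right (show t * (Fintype.card K - 1) ≤ m * _ by omega) (by omega)
  have hsm : t = m → s = 0 := by rintro rfl; omega
  have hdeg : 1 + t * (Fintype.card K - 1) + s = d := by omega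
  refine ⟨hdeg ▸ isHomogeneous_minWeightPoly (Fintype.card K) t ω, ?_⟩
  rw [← card_isRep_and_minWeightLocus htm hsm hω, ← Fintype.card_subtype,
    ← Nat.card_eq_fintype_card]
  exact congrArg _ (Nat.card_congr ((Equiv.subtypeSubtypeEquivSubtypeInter _ _).trans
    (Equiv.subtypeEquivRight fun v =>
      and_congr_right fun _ => eval_minWeightPoly_ne_zero_iff t ω v)))

open MvPolynomial in
open Fin.NatCast in
/-- The polynomial `G = X_t ∏_{i<t}(X_i^{q-1} − X_t^{q-1}) ∏_{j=1}^{s}(X_{t+1} − ω_j X_t)`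
is homogeneous of degree `d` and has exactly `(q−s)q^{m−t−1}` non-zeros in `P^m(F_q)`. -/
theorem PRM_min_weight_example (K : Type) [Field K] [Fintype K] [DecidableEq K]
    (q : ℕ) (hq : Fintype.card K = q) (m d t s : ℕ) (hm : 1 ≤ m)
    (hd1 : 1 ≤ d) (hd2 : d ≤ m * (q - 1) + 1)
    (hts : d - 1 = t * (q - 1) + s) (hs : s < q - 1)
    (ω : Fin s → K) (hω : Function.Injective ω) :
    (X ((t : ℕ) : Fin (m + 1)) *
        (∏ i ∈ Finset.range t,
          (X ((i : ℕ) : Fin (m + 1)) ^ (q - 1) - X ((t : ℕ) : Fin (m + 1)) ^ (q - 1))) *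
        ∏ j : Fin s,
          (X ((t + 1 : ℕ) : Fin (m + 1)) - C (ω j) * X ((t : ℕ) : Fin (m + 1)))
        : MvPolynomial (Fin (m + 1)) K).IsHomogeneous d ∧
    (((Finset.univ.filter
        (fun p : {v : Fin (m + 1) → K // IsRep v} =>
          MvPolynomial.eval p.1
            (X ((t : ℕ) : Fin (m + 1)) *
              (∏ i ∈ Finset.range t,
                (X ((i : ℕ) : Fin (m + 1)) ^ (q - 1) -
                  X ((t : ℕ) : Fin (m + 1)) ^ (q - 1))) *
              ∏ j : Fin s,
                (X ((t + 1 : ℕ) : Fin (m + 1)) -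
                  C (ω j) * X ((t : ℕ) : Fin (m + 1)))) ≠ 0)).card : ℚ))
      = ((q : ℚ) - s) * (q : ℚ) ^ ((m : ℤ) - t - 1) :=
  PRM_min_weight_example_general K q hq m d t s hd1 hd2 hts ω hω
end

section
/- Let F_q be a finite field, m ≥ 1, 1 ≤ d ≤ m(q-1)+1, and let F, G be homogeneous polynomials of degree d in F_q[X_0,…,X_m] such that the codeword c_F (evaluation of F at representatives of all points of P^m(F_q)) is a minimum weight codeword of PRM_q(d,m). If the zero sets V(F) and V(G) in P^m(F_q) are equal, then c_F = λ·c_G for some nonzero λ ∈ F_q. -/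
/-- Hamming weight of a vector. -/
def wt {ι K : Type} [Fintype ι] [DecidableEq K] [Zero K] (c : ι → K) : ℕ :=
  (Finset.univ.filter fun i => c i ≠ 0).card

/-- If `c_F` is a minimum weight codeword of `PRM_q(d,m)` and `V(F) = V(G)` in
`P^m(F_q)`, then `c_F = λ · c_G` for some nonzero `λ ∈ F_q`. -/
theorem min_weight_same_zero_set (K : Type) [Field K] [Fintype K] [DecidableEq K]
    (q : ℕ) (hq : Fintype.card K = q) (m d : ℕ) (hm : 1 ≤ m)
    (hd1 : 1 ≤ d) (hd2 : d ≤ m * (q - 1) + 1)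
    (F G : MvPolynomial (Fin (m + 1)) K)
    (hFhom : F.IsHomogeneous d) (hGhom : G.IsHomogeneous d)
    (hF0 : (fun p : {v : Fin (m + 1) → K // IsRep v} =>
      MvPolynomial.eval p.1 F) ≠ 0)
    (hFmin : ∀ F' : MvPolynomial (Fin (m + 1)) K, F'.IsHomogeneous d →
      (fun p : {v : Fin (m + 1) → K // IsRep v} => MvPolynomial.eval p.1 F') ≠ 0 →
      wt (fun p : {v : Fin (m + 1) → K // IsRep v} => MvPolynomial.eval p.1 F)
        ≤ wt (fun p : {v : Fin (m + 1) → K // IsRep v} => MvPolynomial.eval p.1 F'))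
    (hVFG : ∀ v : Fin (m + 1) → K, v ≠ 0 →
      (MvPolynomial.eval v F = 0 ↔ MvPolynomial.eval v G = 0)) :
    ∃ lam : K, lam ≠ 0 ∧
      ∀ p : {v : Fin (m + 1) → K // IsRep v},
        MvPolynomial.eval p.1 F = lam * MvPolynomial.eval p.1 G := by
  classical
  -- points with a representative are nonzero
  have hne : ∀ p : {v : Fin (m + 1) → K // IsRep v}, p.1 ≠ 0 := by
    intro p h
    obtain ⟨i, hi1, -⟩ := p.2
    rw [h] at hi1
    exact one_ne_zero hi1.symm
  -- pick a point where F doesn't vanish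
  obtain ⟨p0, hp0⟩ := Function.ne_iff.mp hF0
  simp only [Pi.zero_apply] at hp0
  have hG0 : MvPolynomial.eval p0.1 G ≠ 0 := fun h =>
    hp0 ((hVFG p0.1 (hne p0)).mpr h)
  set lam : K := MvPolynomial.eval p0.1 F / MvPolynomial.eval p0.1 G with hlam
  have hlamne : lam ≠ 0 := div_ne_zero hp0 hG0
  refine ⟨lam, hlamne, ?_⟩
  set H : MvPolynomial (Fin (m + 1)) K := F - MvPolynomial.C lam * G with hH
  have hHhom : H.IsHomogeneous d := by
    have : (MvPolynomial.C lam * G).IsHomogeneous (0 + d) :=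
      (MvPolynomial.isHomogeneous_C _ _).mul hGhom
    rw [zero_add] at this
    exact hFhom.sub this
  have hHeval : ∀ v : Fin (m + 1) → K, MvPolynomial.eval v H =
      MvPolynomial.eval v F - lam * MvPolynomial.eval v G := by
    intro v; simp [hH]
  -- H vanishes at p0
  have hHp0 : MvPolynomial.eval p0.1 H = 0 := by
    rw [hHeval, hlam, div_mul_cancel₀ _ hG0, sub_self]
  -- support of H ⊊ support of F
  have hsub : (Finset.univ.filter fun p : {v : Fin (m + 1) → K // IsRep v} =>
      MvPolynomial.eval p.1 H ≠ 0) ⊂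
      (Finset.univ.filter fun p => MvPolynomial.eval p.1 F ≠ 0) := by
    constructor
    · intro p hp
      simp only [Finset.mem_filter, Finset.mem_univ, true_and] at hp ⊢
      intro hF
      apply hp
      rw [hHeval, hF, (hVFG p.1 (hne p)).mp hF, mul_zero, sub_zero]
    · intro hsup
      have := hsup (by simp [hp0] : p0 ∈ _)
      simp only [Finset.mem_filter, Finset.mem_univ, true_and] at this
      exact this hHp0
  -- hence c_H = 0 by minimality
  by_cases hH0 : (fun p : {v : Fin (m + 1) → K // IsRep v} =>
      MvPolynomial.eval p.1 H) = 0
  · intro p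
    have := congrFun hH0 p
    simp only [Pi.zero_apply] at this
    rw [hHeval] at this
    exact sub_eq_zero.mp this
  · exact absurd (hFmin H hHhom hH0)
      (not_le.mpr (by simpa [wt] using Finset.card_lt_card hsub))
end

section
/- Let q ≥ 2 and m ≥ 1 be integers and 1 ≤ d ≤ m(q-1)+1. Then α_q(d,m) = β_q(d,m), where α_q(d,m) := Σ_{e=1, e≡d mod (q-1)}^{d} Σ_{j=0}^{m+1} (-1)^j C(m+1,j) C(e−jq+m, e−jq) and β_q(d,m) := C(m+d,d) − Σ_{j=2}^{m+1} (-1)^j C(m+1,j) Σ_{i=0}^{j-2} C(d+(i+1)(q−1)−jq+m, d+(i+1)(q−1)−jq). -/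
/-!
Write `r = q - 1`, `c j = (-1)^j C(m+1, j)` and `M x = C(x+m, m)` (zero for `x < 0`), so that
both formulas are sums of values of `M`. The `(m+1)`-st backward difference of `M` is the
indicator of `0`, i.e. `∑ⱼ c j * M (x - j) = [x = 0]`.

Writing the residues as `e = d - k r` and putting `n = k + j`, Sørensen's sum becomes
`∑ⱼ c j ∑_{n ≥ j} M (d - n r - j)` minus the term `[r ∣ d]` coming from `e = 0`. Summed over
all `n ≥ 0` the double sum collapses to `[r ∣ d]` as well, so Sørensen's sum is
`-∑ⱼ c j ∑_{n < j} M (d - n r - j)`. The terms with `n = 0` give `C(m+d, d)`, and the remaining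
ones, reindexed by `i = j - 1 - n`, are Mercier–Rolland's correction.
-/

open Finset

/-- The coefficient of `X ^ x` in `(1 - X) ^ (-n)`, i.e. `C(x + n - 1, x)`, and `0` for `x < 0`. -/
def multichooseInt (n : ℕ) (x : ℤ) : ℤ := if 0 ≤ x then (n.multichoose x.toNat : ℤ) else 0

namespace multichooseInt

theorem of_neg {n : ℕ} {x : ℤ} (hx : x < 0) : multichooseInt n x = 0 := by
  simp [multichooseInt, hx.not_ge]

theorem zero_left (x : ℤ) : multichooseInt 0 x = if x = 0 then 1 else 0 := by
  unfold multichooseInt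
  obtain hx | rfl | hx := lt_trichotomy x 0
  · simp [hx.not_ge, hx.ne]
  · simp
  · obtain ⟨k, rfl⟩ : ∃ k : ℕ, x = k + 1 := ⟨x.toNat - 1, by omega⟩
    simp [hx.le, hx.ne', show ((k : ℤ) + 1).toNat = k + 1 by omega]

theorem succ_sub_pred (n : ℕ) (x : ℤ) :
    multichooseInt (n + 1) x - multichooseInt (n + 1) (x - 1) = multichooseInt n x := by
  unfold multichooseInt
  obtain hx | rfl | hx := lt_trichotomy x 0
  · simp [hx.not_ge, show ¬ 1 ≤ x by omega]
  · simp
  · obtain ⟨k, rfl⟩ : ∃ k : ℕ, x = k + 1 := ⟨x.toNat - 1, by omega⟩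
    simp only [show ((k : ℤ) + 1).toNat = k + 1 by omega, add_sub_cancel_right, Int.toNat_natCast,
      hx.le, Nat.cast_nonneg, if_true, Nat.multichoose_succ_succ]
    push_cast
    ring

theorem fwdDiff_neg_one (n : ℕ) :
    fwdDiff (-1) (multichooseInt (n + 1)) = -multichooseInt n := by
  ext x
  simp only [fwdDiff, Pi.neg_apply, ← succ_sub_pred n x]
  ring_nf

theorem fwdDiff_neg_one_iter (n : ℕ) :
    (fwdDiff (-1))^[n] (multichooseInt n) = (-1 : ℤ) ^ n • multichooseInt 0 := by
  induction n with
  | zero => simp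
  | succ n ih =>
    rw [Function.iterate_succ_apply, fwdDiff_neg_one, ← neg_one_smul ℤ (multichooseInt n),
      fwdDiff_iter_const_smul, ih, smul_smul, pow_succ']

end multichooseInt

theorem alternating_sum_choose_eq_fwdDiff_iter (f : ℤ → ℤ) (n : ℕ) (x : ℤ) :
    ∑ j ∈ range (n + 1), (-1 : ℤ) ^ j * (n.choose j : ℤ) * f (x - j) =
      (-1) ^ n * (fwdDiff (-1))^[n] f x := by
  rw [fwdDiff_iter_eq_sum_shift, mul_sum]
  refine sum_congr rfl fun j hj => ?_
  have hsign : (-1 : ℤ) ^ n * (-1) ^ (n - j) = (-1) ^ j := by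
    rw [← pow_add, show n + (n - j) = j + 2 * (n - j) by have := mem_range.mp hj; omega,
      pow_add, pow_mul, neg_one_sq, one_pow, mul_one]
  rw [smul_eq_mul, nsmul_eq_mul, mul_neg_one, ← sub_eq_add_neg, ← mul_assoc, ← mul_assoc,
    hsign]

theorem sum_alternating_multichooseInt (n : ℕ) (x : ℤ) :
    ∑ j ∈ range (n + 1), (-1 : ℤ) ^ j * (n.choose j : ℤ) * multichooseInt n (x - j) =
      if x = 0 then 1 else 0 := by
  rw [alternating_sum_choose_eq_fwdDiff_iter, multichooseInt.fwdDiff_neg_one_iter, Pi.smul_apply,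
    smul_eq_mul, ← mul_assoc, ← pow_add, Even.neg_one_pow ⟨n, rfl⟩, one_mul,
    multichooseInt.zero_left]

theorem intBinom_add_self (m : ℕ) (x : ℤ) : intBinom (x + m) x = multichooseInt (m + 1) x := by
  unfold intBinom multichooseInt
  by_cases hx : 0 ≤ x
  · rw [if_neg hx.not_gt, if_pos (by omega), if_pos hx, Nat.multichoose_eq,
      show (x + m).toNat = m + 1 + x.toNat - 1 by omega]
  · rw [if_pos (not_le.mp hx), if_neg hx]

theorem sum_range_sub_mul_eq_sum_filter_mod (g : ℤ → ℤ) (hg : ∀ y < 0, g y = 0) {r : ℕ}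
    (hr : 0 < r) (d : ℕ) :
    ∑ k ∈ range (d + 1), g (d - k * r) =
      ∑ e ∈ (Icc 1 d).filter (fun e => e % r = d % r), g e + if r ∣ d then g 0 else 0 := by
  have hsupp : ∀ k ∈ range (d + 1), g (d - k * r) ≠ 0 → k * r ≤ d := fun k _ hk => by
    by_contra hkd
    have : (d : ℤ) < k * r := by exact_mod_cast not_le.mp hkd
    exact hk (hg _ (by linarith))
  have hreindex : ∑ k ∈ (range (d + 1)).filter (fun k => k * r ≤ d), g (d - k * r) =
      ∑ e ∈ (range (d + 1)).filter (fun e => e % r = d % r), g e := by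
    refine sum_nbij' (fun k => d - k * r) (fun e => (d - e) / r) ?_ ?_ ?_ ?_ ?_
    · intro k hk
      simp only [mem_filter, mem_range] at hk ⊢
      exact ⟨by omega, (Nat.modEq_iff_dvd' (Nat.sub_le _ _)).mpr <| by
        rw [Nat.sub_sub_self hk.2]; exact dvd_mul_left r k⟩
    · intro e he
      simp only [mem_filter, mem_range] at he ⊢
      have := Nat.div_mul_cancel ((Nat.modEq_iff_dvd' (by omega)).mp he.2)
      exact ⟨by have := Nat.div_le_self (d - e) r; omega, by omega⟩
    · intro k hk
      simp only [mem_filter, mem_range] at hk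
      simp [Nat.sub_sub_self hk.2, Nat.mul_div_cancel k hr]
    · intro e he
      simp only [mem_filter, mem_range] at he
      have := Nat.div_mul_cancel ((Nat.modEq_iff_dvd' (by omega)).mp he.2)
      omega
    · intro k hk
      simp only [mem_filter] at hk
      rw [Nat.cast_sub hk.2, Nat.cast_mul]
  have hzero : (range (d + 1)).filter (fun e => e % r = d % r) =
      (Icc 1 d).filter (fun e => e % r = d % r) ∪ ((range 1).filter fun e => e % r = d % r) := by
    rw [← filter_union]
    congr 1
    ext e
    simp only [mem_range, mem_union, mem_Icc]
    omega
  have hdisj : Disjoint (Icc 1 d) (range 1) := by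
    simp only [disjoint_left, mem_Icc, mem_range]
    omega
  rw [← sum_filter_of_ne hsupp, hreindex, hzero, sum_union (disjoint_filter_filter hdisj)]
  simp [sum_filter, Nat.dvd_iff_mod_eq_zero, eq_comm]

theorem sum_range_sub_mul_sub_eq (f : ℤ → ℤ) (hf : ∀ y < 0, f y = 0) {r : ℕ} (hr : 0 < r)
    (d j : ℕ) :
    ∑ k ∈ range (d + 1), f (d - k * r - j * (r + 1)) =
      ∑ n ∈ range (d + 1), f (d - n * r - j) - ∑ n ∈ range j, f (d - n * r - j) := by
  have htail : ∑ k ∈ range j, f (d - ((d + 1 + k : ℕ) : ℤ) * r - j) = 0 :=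
    sum_eq_zero fun k _ => hf _ <| by
      have : (1 : ℤ) ≤ r := by exact_mod_cast hr
      push_cast
      nlinarith
  have hlong := sum_range_add (fun n => f (d - n * r - j)) (d + 1) j
  rw [htail, add_zero, add_comm, sum_range_add] at hlong
  rw [← hlong, add_sub_cancel_left]
  refine sum_congr rfl fun k _ => congrArg f ?_
  push_cast
  ring

theorem sum_range_succ_sub_mul_eq (f : ℤ → ℤ) (r d t : ℕ) :
    ∑ n ∈ range (t + 1), f (d - n * r - (t + 1 : ℕ)) =
      f (d - (t + 1 : ℕ)) + ∑ i ∈ range t, f (d + (i + 1) * r - (t + 1 : ℕ) * (r + 1)) := by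
  rw [sum_range_succ', add_comm, ← sum_range_reflect]
  simp only [Nat.cast_zero, zero_mul, sub_zero]
  congr 1
  refine sum_congr rfl fun i hi => congrArg f ?_
  have hit : i < t := mem_range.mp hi
  rw [Nat.cast_add (t - 1 - i), Nat.cast_sub (by omega), Nat.cast_sub (by omega)]
  push_cast
  ring

theorem sum_filter_mod_sum_alternating_eq (m : ℕ) {r : ℕ} (hr : 0 < r) (d : ℕ) :
    ∑ e ∈ (Icc 1 d).filter (fun e => e % r = d % r), ∑ j ∈ range (m + 2),
        (-1 : ℤ) ^ j * ((m + 1).choose j : ℤ) * multichooseInt (m + 1) (e - j * (r + 1)) =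
      -∑ j ∈ range (m + 2), (-1 : ℤ) ^ j * ((m + 1).choose j : ℤ) *
        ∑ n ∈ range j, multichooseInt (m + 1) (d - n * r - j) := by
  set D : ℤ → ℤ := fun y => ∑ j ∈ range (m + 2),
    (-1 : ℤ) ^ j * ((m + 1).choose j : ℤ) * multichooseInt (m + 1) (y - j * (r + 1))
  have hD_neg : ∀ y < 0, D y = 0 := fun y hy => sum_eq_zero fun j _ => by
    rw [multichooseInt.of_neg (by nlinarith), mul_zero]
  have hD_zero : D 0 = 1 := by
    simp only [D]
    rw [sum_range_succ', sum_eq_zero fun j _ => by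
      rw [multichooseInt.of_neg (by push_cast; nlinarith), mul_zero]]
    simp [multichooseInt]
  have hdiff : ∀ x : ℤ, ∑ j ∈ range (m + 2), (-1 : ℤ) ^ j * ((m + 1).choose j : ℤ) *
      multichooseInt (m + 1) (x - j) = if x = 0 then 1 else 0 :=
    sum_alternating_multichooseInt (m + 1)
  have hcount : ∑ n ∈ range (d + 1), (if (d - n * r : ℤ) = 0 then 1 else 0 : ℤ) =
      if r ∣ d then 1 else 0 := by
    rw [sum_range_sub_mul_eq_sum_filter_mod _ (fun y hy => if_neg hy.ne) hr, if_pos rfl,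
      sum_eq_zero fun e he => if_neg (by simp at he; omega), zero_add]
  have hperiodic := sum_range_sub_mul_eq_sum_filter_mod D hD_neg hr d
  rw [hD_zero] at hperiodic
  suffices ∑ k ∈ range (d + 1), D (d - k * r) = (if r ∣ d then 1 else 0) -
      ∑ j ∈ range (m + 2), (-1 : ℤ) ^ j * ((m + 1).choose j : ℤ) *
        ∑ n ∈ range j, multichooseInt (m + 1) (d - n * r - j) by
    rw [this] at hperiodic
    linarith
  calc ∑ k ∈ range (d + 1), D (d - k * r)
      = ∑ j ∈ range (m + 2), (-1 : ℤ) ^ j * ((m + 1).choose j : ℤ) *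
          ∑ k ∈ range (d + 1), multichooseInt (m + 1) (d - k * r - j * (r + 1)) := by
        simp only [D, mul_sum]
        exact sum_comm
    _ = ∑ j ∈ range (m + 2), (-1 : ℤ) ^ j * ((m + 1).choose j : ℤ) *
          (∑ n ∈ range (d + 1), multichooseInt (m + 1) (d - n * r - j) -
            ∑ n ∈ range j, multichooseInt (m + 1) (d - n * r - j)) := by
        refine sum_congr rfl fun j _ => ?_
        rw [sum_range_sub_mul_sub_eq _ (fun _ => multichooseInt.of_neg) hr]
    _ = ∑ n ∈ range (d + 1), (if (d - n * r : ℤ) = 0 then 1 else 0 : ℤ) -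
          ∑ j ∈ range (m + 2), (-1 : ℤ) ^ j * ((m + 1).choose j : ℤ) *
            ∑ n ∈ range j, multichooseInt (m + 1) (d - n * r - j) := by
        simp only [mul_sub, sum_sub_distrib, ← hdiff, mul_sum]
        rw [sum_comm]
    _ = _ := by rw [hcount]

theorem sum_alternating_sum_range_eq (m r : ℕ) {d : ℕ} (hd : d ≠ 0) :
    ∑ j ∈ range (m + 2), (-1 : ℤ) ^ j * ((m + 1).choose j : ℤ) *
        ∑ n ∈ range j, multichooseInt (m + 1) (d - n * r - j) =
      -multichooseInt (m + 1) d +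
        ∑ j ∈ Icc 2 (m + 1), (-1 : ℤ) ^ j * ((m + 1).choose j : ℤ) *
          ∑ i ∈ range (j - 1), multichooseInt (m + 1) (d + (i + 1) * r - j * (r + 1)) := by
  have hdiff : ∑ j ∈ range (m + 2), (-1 : ℤ) ^ j * ((m + 1).choose j : ℤ) *
      multichooseInt (m + 1) (d - j) = 0 := by
    rw [sum_alternating_multichooseInt (m + 1), if_neg (by exact_mod_cast hd)]
  have hIcc : ∑ j ∈ Icc 2 (m + 1), (-1 : ℤ) ^ j * ((m + 1).choose j : ℤ) *
        ∑ i ∈ range (j - 1), multichooseInt (m + 1) (d + (i + 1) * r - j * (r + 1)) =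
      ∑ j ∈ range (m + 2), (-1 : ℤ) ^ j * ((m + 1).choose j : ℤ) *
        ∑ i ∈ range (j - 1), multichooseInt (m + 1) (d + (i + 1) * r - j * (r + 1)) :=
    sum_subset (fun j hj => by simp only [mem_Icc, mem_range] at hj ⊢; omega) fun j hj hj' => by
      simp only [mem_Icc, mem_range, not_and, not_le] at hj hj'
      rw [show j - 1 = 0 by omega, sum_range_zero, mul_zero]
  rw [hIcc, sum_range_succ' _ (m + 1), sum_range_succ' _ (m + 1)]
  rw [sum_range_succ' _ (m + 1), pow_zero, Nat.choose_zero_right, Nat.cast_one, one_mul,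
    Nat.cast_zero, sub_zero] at hdiff
  simp only [sum_range_succ_sub_mul_eq (multichooseInt (m + 1)), Nat.add_sub_cancel, Nat.zero_sub,
    range_zero, sum_empty, mul_zero, add_zero, mul_add, sum_add_distrib]
  linarith

theorem sorensen_eq_mercier_rolland_general (q m d : ℕ) (hq : 2 ≤ q)
    (hd1 : 1 ≤ d) :
    (∑ e ∈ (Finset.Icc 1 d).filter (fun e => e % (q - 1) = d % (q - 1)),
        ∑ j ∈ Finset.range (m + 2), (-1 : ℤ) ^ j * ((m + 1).choose j : ℤ) *
          intBinom ((e : ℤ) - j * q + m) ((e : ℤ) - j * q))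
      = intBinom ((m : ℤ) + d) d -
          ∑ j ∈ Finset.Icc 2 (m + 1), (-1 : ℤ) ^ j * ((m + 1).choose j : ℤ) *
            ∑ i ∈ Finset.range (j - 1),
              intBinom ((d : ℤ) + (i + 1) * (q - 1) - j * q + m)
                ((d : ℤ) + (i + 1) * (q - 1) - j * q) := by
  obtain ⟨r, rfl⟩ : ∃ r, q = r + 1 := ⟨q - 1, by omega⟩
  rw [add_comm (m : ℤ)]
  simp only [intBinom_add_self, Nat.add_sub_cancel, Nat.cast_add, Nat.cast_one,
    add_sub_cancel_right]
  rw [sum_filter_mod_sum_alternating_eq m (by omega), sum_alternating_sum_range_eq m r (by omega)]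
  ring

/-- Sørensen's formula equals the Mercier–Rolland formula for the dimension of
the projective Reed-Muller code `PRM_q(d,m)`. -/
theorem sorensen_eq_mercier_rolland (q m d : ℕ) (hq : 2 ≤ q) (hm : 1 ≤ m)
    (hd1 : 1 ≤ d) (hd2 : d ≤ m * (q - 1) + 1) :
    (∑ e ∈ (Finset.Icc 1 d).filter (fun e => e % (q - 1) = d % (q - 1)),
        ∑ j ∈ Finset.range (m + 2), (-1 : ℤ) ^ j * ((m + 1).choose j : ℤ) *
          intBinom ((e : ℤ) - j * q + m) ((e : ℤ) - j * q))
      = intBinom ((m : ℤ) + d) d -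
          ∑ j ∈ Finset.Icc 2 (m + 1), (-1 : ℤ) ^ j * ((m + 1).choose j : ℤ) *
            ∑ i ∈ Finset.range (j - 1),
              intBinom ((d : ℤ) + (i + 1) * (q - 1) - j * q + m)
                ((d : ℤ) + (i + 1) * (q - 1) - j * q) :=
  sorensen_eq_mercier_rolland_general q m d hq hd1
end
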